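/- Let ω be a weight on ℝ^{2d} ≅ ℂ^d and Φ₁, Φ₂ be quasi-Young functions of order r₀ ∈ (0,1]. Then: (1) if ρ ∈ (0,1] and ω_r(z) = ω(z)e^{−r|z|^ρ} for some r > 0, then A^{Φ₁,Φ₂}_{(ω)}(ℂ^d) is continuously embedded in A^{r₀}_{(ω_r)}(ℂ^d); and (2) if r > 2d/r₀ and ω_r(z) = ω(z)⟨z⟩^{−r} where ⟨z⟩ = (1+|z|²)^{1/2}, then A^{Φ₁,Φ₂}_{(ω)}(ℂ^d) is continuously embedded in A^{r₀}_{(ω_r)}(ℂ^d). -/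

import Mathlib

open MeasureTheory Filter
open scoped ENNReal NNReal BigOperators ComplexConjugate

noncomputable section

/-- A Young function: convex on `[0,∞)` with values in `[0,∞]`, vanishing at `0`
and tending to `∞` at `∞`. -/
structure YoungFunction : Type where
  toFun : ℝ≥0 → ℝ≥0∞
  convex' : ∀ s t₁ t₂ : ℝ≥0, s ≤ 1 →
    toFun (s * t₁ + (1 - s) * t₂) ≤ (s : ℝ≥0∞) * toFun t₁ + ((1 - s : ℝ≥0) : ℝ≥0∞) * toFun t₂
  map_zero' : toFun 0 = 0
  tendsto_top' : Tendsto toFun atTop atTop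

/-- `Φ` is a quasi-Young function of order `r`, i.e. `Φ t = Φ₀ (t ^ r)` for a
Young function `Φ₀`. -/
def IsQuasiYoung (Φ : ℝ≥0 → ℝ≥0∞) (r : ℝ) : Prop :=
  ∃ Φ₀ : YoungFunction, ∀ t : ℝ≥0, Φ t = Φ₀.toFun (t ^ r)

/-- Extension of `Φ` to `[0,∞]`. -/
def extendPhi (Φ : ℝ≥0 → ℝ≥0∞) : ℝ≥0∞ → ℝ≥0∞ :=
  fun t => if t = ∞ then ∞ else Φ t.toNNReal

/-- Luxemburg quasi-norm of an `ℝ≥0∞`-valued function. For a quasi-Young function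
`Φ` of order `r₀`, `Φ t = Φ₀ (t ^ r₀)`, this coincides with
`(inf {λ : ∫ Φ₀(G^{r₀}/λ) ≤ 1})^(1/r₀)` after the substitution `λ ↦ λ^{r₀}`. -/
def luxNorm {α : Type*} [MeasurableSpace α] (μ : Measure α) (Φ : ℝ≥0 → ℝ≥0∞)
    (G : α → ℝ≥0∞) : ℝ≥0∞ :=
  sInf {lam : ℝ≥0∞ | 0 < lam ∧ lam ≠ ∞ ∧ ∫⁻ x, extendPhi Φ (G x / lam) ∂μ ≤ 1}

/-- Mixed Luxemburg quasi-norm. -/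
def mixedLux {α β : Type*} [MeasurableSpace α] [MeasurableSpace β]
    (μ₁ : Measure α) (μ₂ : Measure β) (Φ₁ Φ₂ : ℝ≥0 → ℝ≥0∞)
    (G : α × β → ℝ≥0∞) : ℝ≥0∞ :=
  luxNorm μ₂ Φ₂ fun y => luxNorm μ₁ Φ₁ fun x => G (x, y)

/-- `|f| · ω` as an `ℝ≥0∞`-valued function. -/
def wFun {α : Type*} (ω : α → ℝ) (f : α → ℂ) : α → ℝ≥0∞ :=
  fun x => (‖f x‖₊ : ℝ≥0∞) * ENNReal.ofReal (ω x)

/-- Weighted Orlicz quasi-norm `‖f‖_{L^Φ_{(ω)}}`. -/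
def orliczNorm {α : Type*} [MeasurableSpace α] (μ : Measure α) (Φ : ℝ≥0 → ℝ≥0∞)
    (ω : α → ℝ) (f : α → ℂ) : ℝ≥0∞ :=
  luxNorm μ Φ (wFun ω f)

/-- Weighted mixed Orlicz quasi-norm `‖f‖_{L^{Φ₁,Φ₂}_{(ω)}}`. -/
def mixedNorm {α β : Type*} [MeasurableSpace α] [MeasurableSpace β]
    (μ₁ : Measure α) (μ₂ : Measure β) (Φ₁ Φ₂ : ℝ≥0 → ℝ≥0∞)
    (ω : α × β → ℝ) (f : α × β → ℂ) : ℝ≥0∞ :=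
  mixedLux μ₁ μ₂ Φ₁ Φ₂ (wFun ω f)

/-- The quasi-Young function `t ↦ t^p/p` (giving `L^p`). -/
def phiP (p : ℝ) : ℝ≥0 → ℝ≥0∞ := fun t => ((t ^ p : ℝ≥0) : ℝ≥0∞) / ENNReal.ofReal p

/-- The Young function `Φ_∞` (giving `L^∞`). -/
def phiInf : ℝ≥0 → ℝ≥0∞ := fun t => if t ≤ 1 then 0 else ∞

/-- A weight: positive, with `ω` and `1/ω` locally bounded. -/
def IsWeight {E : Type*} [NormedAddCommGroup E] (ω : E → ℝ) : Prop :=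
  (∀ x, 0 < ω x) ∧ ∀ R : ℝ, ∃ C > 0, ∀ x : E, ‖x‖ ≤ R → ω x ≤ C ∧ C⁻¹ ≤ ω x

/-- `ω` is `v`-moderate. -/
def IsModerate {E : Type*} [NormedAddCommGroup E] (ω v : E → ℝ) : Prop :=
  ∃ C > 0, ∀ x y, ω (x + y) ≤ C * ω x * v y

/-- `v` is submultiplicative (and even). -/
def IsSubmultiplicative {E : Type*} [NormedAddCommGroup E] (v : E → ℝ) : Prop :=
  IsWeight v ∧ (∀ x, v (-x) = v x) ∧ ∃ C > 0, ∀ x y, v (x + y) ≤ C * v x * v y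

/-- The class `𝒫_E` of moderate weights. -/
def InPE {E : Type*} [NormedAddCommGroup E] (ω : E → ℝ) : Prop :=
  IsWeight ω ∧ ∃ v : E → ℝ, IsSubmultiplicative v ∧ IsModerate ω v

/-- `ℝ^d`. -/
abbrev RD (d : ℕ) := Fin d → ℝ

/-- The phase space `ℝ^{2d} = ℝ^d × ℝ^d`. -/
abbrev PS (d : ℕ) := (Fin d → ℝ) × (Fin d → ℝ)

/-- Formal Hermite series (coefficients). -/
abbrev HS (d : ℕ) := (Fin d → ℕ) → ℂ

/-- Index set `ℤ^d × ℤ^d` for Gabor systems. -/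
abbrev IdxD (d : ℕ) := (Fin d → ℤ) × (Fin d → ℤ)

/-- One–dimensional Hermite function. -/
def hermite1 (n : ℕ) (x : ℝ) : ℝ :=
  Real.pi ^ (-(1:ℝ)/4) * (-1 : ℝ) ^ n * (((2:ℝ) ^ n * (n.factorial : ℝ)) ^ (-(1:ℝ)/2)) *
    Real.exp (x ^ 2 / 2) * iteratedDeriv n (fun t => Real.exp (-t ^ 2)) x

/-- `d`–dimensional Hermite function. -/
def hermiteF (d : ℕ) (α : Fin d → ℕ) (x : RD d) : ℝ := ∏ i, hermite1 (α i) (x i)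

/-- Membership of a formal Hermite series in the Pilipović distribution space
`ℋ'_♭(ℝ^d)`: `|c(α)| ≲ r^{|α|} (α!)^{1/2}` for every `r > 0`. -/
def InHFlatDual (d : ℕ) (c : HS d) : Prop :=
  ∀ r : ℝ, 0 < r → ∃ C > 0, ∀ α : Fin d → ℕ,
    ‖c α‖ ≤ C * r ^ (∑ i, α i) * Real.sqrt (∏ i, ((α i).factorial : ℝ))

/-- Euclidean dot product on `ℝ^d`. -/
def dotR {d : ℕ} (x y : RD d) : ℝ := ∑ i, x i * y i

/-- Short-time Fourier transform of a function `g` with window `φ`. -/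
def stftF (d : ℕ) (φ g : RD d → ℂ) (X : PS d) : ℂ :=
  (((2 * Real.pi) ^ (-(d:ℝ)/2) : ℝ) : ℂ) *
    ∫ y : RD d, g y * (starRingEnd ℂ) (φ (y - X.1)) *
      Complex.exp (-Complex.I * ((dotR y X.2 : ℝ) : ℂ))

/-- Standard Gaussian window. -/
def gaussW (d : ℕ) : RD d → ℂ :=
  fun x => ((Real.pi ^ (-(d:ℝ)/4) * Real.exp (-(∑ i, (x i)^2) / 2) : ℝ) : ℂ)

/-- Short-time Fourier transform of a formal Hermite series. -/
def stftD (d : ℕ) (φ : RD d → ℂ) (c : HS d) (X : PS d) : ℂ :=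
  ∑' α : Fin d → ℕ, c α * stftF d φ (fun y => ((hermiteF d α y : ℝ) : ℂ)) X

/-- Orlicz modulation quasi-norm of a formal Hermite series. -/
def modNormD (d : ℕ) (Φ₁ Φ₂ : ℝ≥0 → ℝ≥0∞) (ω : PS d → ℝ) (c : HS d) : ℝ≥0∞ :=
  mixedNorm volume volume Φ₁ Φ₂ ω (stftD d (gaussW d) c)

/-- Orlicz modulation quasi-norm of a function. -/
def modNormF (d : ℕ) (Φ₁ Φ₂ : ℝ≥0 → ℝ≥0∞) (ω : PS d → ℝ) (g : RD d → ℂ) : ℝ≥0∞ :=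
  mixedNorm volume volume Φ₁ Φ₂ ω (stftF d (gaussW d) g)

/-- `‖V_φ g · v‖_{L^p}`. -/
def stftLpNorm (d : ℕ) (p : ℝ≥0∞) (v : PS d → ℝ) (φ g : RD d → ℂ) : ℝ≥0∞ :=
  eLpNorm (fun X : PS d => ‖stftF d φ g X‖ * v X) p volume

/-- Classical modulation `L^p` quasi-norm of a function (Gaussian window). -/
def modLpNormF (d : ℕ) (p : ℝ≥0∞) (v : PS d → ℝ) (g : RD d → ℂ) : ℝ≥0∞ :=
  stftLpNorm d p v (gaussW d) g

/-- Classical modulation `L^p` quasi-norm of a formal Hermite series. -/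
def modLpNorm (d : ℕ) (p : ℝ≥0∞) (ω : PS d → ℝ) (c : HS d) : ℝ≥0∞ :=
  eLpNorm (fun X : PS d => ‖stftD d (gaussW d) c X‖ * ω X) p volume

/-- Weighted mixed Orlicz sequence quasi-norm on `ℤ^d × ℤ^d`. -/
def seqNorm (d : ℕ) (Φ₁ Φ₂ : ℝ≥0 → ℝ≥0∞) (W : IdxD d → ℝ) (a : IdxD d → ℂ) : ℝ≥0∞ :=
  mixedNorm Measure.count Measure.count Φ₁ Φ₂ W a

/-- Real vector associated with an integer vector. -/
def ivec {d : ℕ} (k : Fin d → ℤ) : RD d := fun i => (k i : ℝ)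

/-- Lattice point `(εk, εκ)` in phase space. -/
def latPt {d : ℕ} (ε : ℝ) (kκ : IdxD d) : PS d := (ε • ivec kκ.1, ε • ivec kκ.2)

/-- The unit cube `[0,1]^{2d}` of phase space. -/
def Qcube (d : ℕ) : Set (PS d) :=
  {X | (∀ i, X.1 i ∈ Set.Icc (0:ℝ) 1) ∧ ∀ i, X.2 i ∈ Set.Icc (0:ℝ) 1}

/-- Wiener amalgam quasi-norm `W(L^Φ, ℓ^{Φ₁,Φ₂}_{(ω)})` on phase space. -/
def wienerNorm (d : ℕ) (Φ ΦO₁ ΦO₂ : ℝ≥0 → ℝ≥0∞) (ω : PS d → ℝ) (F : PS d → ℂ) : ℝ≥0∞ :=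
  mixedLux Measure.count Measure.count ΦO₁ ΦO₂
    (fun kκ : IdxD d =>
      luxNorm (volume.restrict (Qcube d)) Φ (fun X : PS d => wFun ω F (X + latPt 1 kκ)))

/-- Gabor atom `e^{iε⟨·,κ⟩} φ(· − εk)`. -/
def gaborAtom (d : ℕ) (ε : ℝ) (φ : RD d → ℂ) (kκ : IdxD d) : RD d → ℂ :=
  fun x => Complex.exp (Complex.I * ((ε * dotR x (ivec kκ.2) : ℝ) : ℂ)) * φ (x - ε • ivec kκ.1)

/-- Gabor atom for a general pair of lattices given by linear bijections. -/
def gaborAtomGen (d : ℕ) (T S : RD d →ₗ[ℝ] RD d) (φ : RD d → ℂ) (kκ : IdxD d) : RD d → ℂ :=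
  fun x => Complex.exp (Complex.I * ((dotR x (S (ivec kκ.2)) : ℝ) : ℂ)) * φ (x - T (ivec kκ.1))

/-- `L²` Gabor coefficient. -/
def gaborCoefL2 (d : ℕ) (g atom : RD d → ℂ) : ℂ := ∫ y : RD d, g y * (starRingEnd ℂ) (atom y)

/-- Two families are dual (Gabor) frames of each other: reconstruction holds
in both orders for `L²` functions. -/
def AreDualGaborFramesGen (d : ℕ) (A B : IdxD d → (RD d → ℂ)) : Prop :=
  ∀ f : RD d → ℂ, MemLp f 2 volume →
    (f =ᵐ[volume] fun x => ∑' kκ : IdxD d, gaborCoefL2 d f (A kκ) * B kκ x) ∧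
    (f =ᵐ[volume] fun x => ∑' kκ : IdxD d, gaborCoefL2 d f (B kκ) * A kκ x)

/-- `{e^{iε⟨·,κ⟩}φ(·−εk)}` and `{e^{iε⟨·,κ⟩}ψ(·−εk)}` are dual frames. -/
def AreDualGaborFrames (d : ℕ) (ε : ℝ) (φ ψ : RD d → ℂ) : Prop :=
  AreDualGaborFramesGen d (gaborAtom d ε φ) (gaborAtom d ε ψ)

/-- Analysis operator `C_φ^ε` acting on a formal Hermite series. -/
def analysisOp (d : ℕ) (ε : ℝ) (φ : RD d → ℂ) (c : HS d) : IdxD d → ℂ :=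
  fun kκ => stftD d φ c (latPt ε kκ)

/-- Synthesis operator `D_ψ^ε`. -/
def synthesisOp (d : ℕ) (ε : ℝ) (ψ : RD d → ℂ) (a : IdxD d → ℂ) : RD d → ℂ :=
  fun x => ∑' kκ : IdxD d, a kκ * gaborAtom d ε ψ kκ x

/-- Hermite coefficients of a function. -/
def toCoef (d : ℕ) (g : RD d → ℂ) : HS d :=
  fun α => ∫ x : RD d, g x * ((hermiteF d α x : ℝ) : ℂ)

/-- `L²`-pairing of a formal Hermite series with a function. -/
def distPairing (d : ℕ) (f : HS d) (g : RD d → ℂ) : ℂ :=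
  ∑' α : Fin d → ℕ, f α * (starRingEnd ℂ) (toCoef d g α)

/-- `ℂ^d`. -/
abbrev CD (d : ℕ) := Fin d → ℂ

/-- The Bargmann kernel `𝔄_d(z,y)`. -/
def bargmannKernel (d : ℕ) (z : CD d) (y : RD d) : ℂ :=
  ((Real.pi ^ (-(d:ℝ)/4) : ℝ) : ℂ) *
    Complex.exp (-(∑ i, (z i)^2 + ((∑ i, (y i)^2 : ℝ) : ℂ)) / 2 +
      ((Real.sqrt 2 : ℝ) : ℂ) * ∑ i, z i * ((y i : ℝ) : ℂ))

/-- The Bargmann transform of a formal Hermite series. -/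
def bargmann (d : ℕ) (c : HS d) (z : CD d) : ℂ :=
  ∑' α : Fin d → ℕ, c α * ∫ y : RD d, bargmannKernel d z y * ((hermiteF d α y : ℝ) : ℂ)

/-- The quasi-norm of `B^{Φ₁,Φ₂}_{(ω)}(ℂ^d)`. -/
def BNorm (d : ℕ) (Φ₁ Φ₂ : ℝ≥0 → ℝ≥0∞) (ω : PS d → ℝ) (F : CD d → ℂ) : ℝ≥0∞ :=
  luxNorm volume Φ₂ (fun ξ : RD d =>
    ENNReal.ofReal ((2 * Real.pi) ^ (-(d:ℝ)/2) * Real.exp (-(∑ i, (ξ i)^2) / 2)) *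
      luxNorm volume Φ₁ (fun x : RD d =>
        (‖F (fun i => ((((2:ℝ) ^ (-(1:ℝ)/2) : ℝ) : ℂ)) * (((x i : ℝ) : ℂ) - Complex.I * ((ξ i : ℝ) : ℂ)))‖₊ : ℝ≥0∞) *
          ENNReal.ofReal (Real.exp (-(∑ i, (x i)^2) / 4) * ω (x, ξ))))

/-- Entire functions on `ℂ^d`. -/
def Entire (d : ℕ) (F : CD d → ℂ) : Prop := AnalyticOnNhd ℂ F Set.univ

/-- The Gelfand–Shilov space `Σ₁`. -/
def InSigma1 {E : Type*} [NormedAddCommGroup E] [NormedSpace ℝ E] (f : E → ℂ) : Prop :=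
  ContDiff ℝ (⊤ : ℕ∞) f ∧ ∀ h : ℝ, 0 < h → ∃ C > 0, ∀ (n m : ℕ) (x : E),
    ‖x‖ ^ m * ‖iteratedFDeriv ℝ n f x‖ ≤ C * h ^ (n + m) * (n.factorial : ℝ) * (m.factorial : ℝ)

/-- `(P, N)` is a quasi-Banach space of order `r₀`: some equivalent quasi-norm
satisfies the `r₀`-power triangle inequality, and the space is complete. -/
def IsQuasiBanachOfOrder {V : Type*} [AddCommGroup V] [Module ℂ V]
    (P : V → Prop) (N : V → ℝ≥0∞) (r₀ : ℝ) : Prop :=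
  (∃ N' : V → ℝ≥0∞,
      (∀ (c : ℂ) (f : V), N' (c • f) = (‖c‖₊ : ℝ≥0∞) * N' f) ∧
      (∀ f g : V, N' (f + g) ^ r₀ ≤ N' f ^ r₀ + N' g ^ r₀) ∧
      ∃ C : ℝ≥0∞, 0 < C ∧ C ≠ ∞ ∧ ∀ f : V, P f → N f ≤ C * N' f ∧ N' f ≤ C * N f) ∧
  ∀ u : ℕ → V, (∀ n, P (u n)) →
    (∀ δ : ℝ≥0∞, 0 < δ → ∃ M : ℕ, ∀ m n, M ≤ m → M ≤ n → N (u m - u n) < δ) →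
    ∃ v : V, P v ∧ Tendsto (fun n => N (u n - v)) atTop (nhds 0)

/-- An (abstract) quasi-Banach space of order `r₀` of elements of `V`. -/
structure QBSpace (V : Type*) [AddCommGroup V] [Module ℂ V] (r₀ : ℝ) where
  Mem : V → Prop
  N : V → ℝ≥0∞
  mem_add : ∀ f g, Mem f → Mem g → Mem (f + g)
  mem_smul : ∀ (c : ℂ) f, Mem f → Mem (c • f)
  norm_smul : ∀ (c : ℂ) (f : V), N (c • f) = (‖c‖₊ : ℝ≥0∞) * N f
  triangle : ∀ f g, Mem f → Mem g → N (f + g) ^ r₀ ≤ N f ^ r₀ + N g ^ r₀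
  finite : ∀ f, Mem f → N f < ∞
  complete : ∀ u : ℕ → V, (∀ n, Mem (u n)) →
    (∀ δ : ℝ≥0∞, 0 < δ → ∃ M : ℕ, ∀ m n, M ≤ m → M ≤ n → N (u m - u n) < δ) →
    ∃ v : V, Mem v ∧ Tendsto (fun n => N (u n - v)) atTop (nhds 0)

/-- Weighted `ℓ^r` quasi-norm. -/
def ellRNorm {ι : Type*} (r : ℝ) (W : ι → ℝ) (a : ι → ℂ) : ℝ≥0∞ :=
  (∑' k, ((‖a k‖₊ : ℝ≥0∞) * ENNReal.ofReal (W k)) ^ r) ^ (1 / r)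

/-- Discrete convolution. -/
def discConv {ι : Type*} [AddGroup ι] (a b : ι → ℂ) : ι → ℂ :=
  fun n => ∑' k, a k * b (n - k)

/-- Semi-discrete convolution on phase space with step `ε`. -/
def semiConv (d : ℕ) (ε : ℝ) (a : IdxD d → ℂ) (F : PS d → ℂ) : PS d → ℂ :=
  fun X => ∑' kκ : IdxD d, a kκ * F (X - latPt ε kκ)

/-- Convolution on phase space. -/
def convPS (d : ℕ) (F G : PS d → ℂ) : PS d → ℂ :=
  fun X => ∫ Y : PS d, F Y * G (X - Y)

/-- Density of the Schwartz space in `L^{Φ₁,Φ₂}(ℝ^{2d})`. -/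
def SchwartzDensePS (d : ℕ) (Φ₁ Φ₂ : ℝ≥0 → ℝ≥0∞) : Prop :=
  ∀ f : PS d → ℂ, Measurable f → mixedNorm volume volume Φ₁ Φ₂ (fun _ => 1) f ≠ ∞ →
    ∀ δ : ℝ≥0∞, 0 < δ → ∃ g : SchwartzMap (PS d) ℂ,
      mixedNorm volume volume Φ₁ Φ₂ (fun _ => 1) (fun X => f X - g X) < δ


namespace Statement18Aux

lemma young_lower (Φ₀ : YoungFunction) :
    ∃ s₁ : ℝ≥0, 1 ≤ s₁ ∧ ∀ s : ℝ≥0, s₁ ≤ s → (s : ℝ≥0∞) ≤ s₁ * Φ₀.toFun s := by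
  obtain ⟨s₀, hs₀⟩ := Filter.eventually_atTop.mp (Φ₀.tendsto_top'.eventually_ge_atTop 1)
  refine ⟨max s₀ 1, le_max_right _ _, ?_⟩
  intro s hs
  have hs1 : (1 : ℝ≥0) ≤ s := le_trans (le_max_right _ _) hs
  have hsne : s ≠ 0 := fun h => by simp [h] at hs1
  set c : ℝ≥0 := max s₀ 1 with hc
  have hdiv : c / s ≤ 1 := (div_le_one (lt_of_lt_of_le one_pos hs1)).mpr hs
  have hconv := Φ₀.convex' (c / s) s 0 hdiv
  rw [mul_zero, add_zero, div_mul_cancel₀ c hsne, Φ₀.map_zero', mul_zero, add_zero] at hconv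
  have h2 : (1 : ℝ≥0∞) ≤ (↑(c / s)) * Φ₀.toFun s :=
    le_trans (hs₀ c (le_max_left _ _)) hconv
  calc (s : ℝ≥0∞) = (s : ℝ≥0∞) * 1 := (mul_one _).symm
    _ ≤ (s : ℝ≥0∞) * ((↑(c / s)) * Φ₀.toFun s) := mul_le_mul_right h2 _
    _ = (c : ℝ≥0∞) * Φ₀.toFun s := by
        rw [← mul_assoc, ← ENNReal.coe_mul, mul_comm s (c / s), div_mul_cancel₀ c hsne]

lemma extendPhi_mono {Φ : ℝ≥0 → ℝ≥0∞} (hΦ : Monotone Φ) : Monotone (extendPhi Φ) := by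
  intro a b hab
  unfold extendPhi
  by_cases hb : b = ∞
  · simp [hb]
  · have ha : a ≠ ∞ := fun h => hb (top_le_iff.mp (h ▸ hab))
    simp only [ha, hb, if_false]
    exact hΦ (ENNReal.toNNReal_mono hb hab)

lemma phiP_mono {r₀ : ℝ} (hr₀ : 0 < r₀) : Monotone (phiP r₀) := by
  intro a b hab
  unfold phiP
  exact ENNReal.div_le_div_right
    (ENNReal.coe_le_coe.mpr (NNReal.rpow_le_rpow hab hr₀.le)) _

lemma extendPhi_phiP {r₀ : ℝ} (hr₀ : 0 < r₀) (t : ℝ≥0∞) :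
    extendPhi (phiP r₀) t = t ^ r₀ / ENNReal.ofReal r₀ := by
  unfold extendPhi phiP
  rcases eq_or_ne t ∞ with h | h
  · subst h
    rw [if_pos rfl, ENNReal.top_rpow_of_pos hr₀]
    rw [ENNReal.top_div_of_ne_top ENNReal.ofReal_ne_top]
  · rw [if_neg h]
    congr 1
    rw [ENNReal.coe_rpow_of_nonneg _ hr₀.le, ENNReal.coe_toNNReal h]

lemma le_mul_sInf {N C : ℝ≥0∞} {S : Set ℝ≥0∞} (hC0 : C ≠ 0) (hC : C ≠ ∞)
    (h : ∀ lam ∈ S, N ≤ C * lam) : N ≤ C * sInf S := by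
  have h1 : N / C ≤ sInf S := le_sInf fun lam hl =>
    (ENNReal.div_le_iff_le_mul (Or.inl hC0) (Or.inl hC)).mpr
      (by rw [mul_comm]; exact h lam hl)
  have h2 := (ENNReal.div_le_iff_le_mul (Or.inl hC0) (Or.inl hC)).mp h1
  rwa [mul_comm] at h2

lemma luxNorm_mono {α : Type*} [MeasurableSpace α] (μ : Measure α) {Φ : ℝ≥0 → ℝ≥0∞}
    (hΦ : Monotone Φ) {G₁ G₂ : α → ℝ≥0∞} (h : ∀ x, G₁ x ≤ G₂ x) :
    luxNorm μ Φ G₁ ≤ luxNorm μ Φ G₂ := by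
  apply sInf_le_sInf
  rintro lam ⟨h0, hne, hint⟩
  exact ⟨h0, hne, le_trans (lintegral_mono fun x =>
    extendPhi_mono hΦ (ENNReal.div_le_div_right (h x) _)) hint⟩

lemma luxNorm_const_mul_le {α : Type*} [MeasurableSpace α] (μ : Measure α)
    (Φ : ℝ≥0 → ℝ≥0∞) {a : ℝ≥0∞} (ha0 : a ≠ 0) (ha : a ≠ ∞) (G : α → ℝ≥0∞) :
    luxNorm μ Φ (fun x => a * G x) ≤ a * luxNorm μ Φ G := by
  apply le_mul_sInf ha0 ha
  rintro lam ⟨h0, hne, hint⟩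
  apply sInf_le
  refine ⟨ENNReal.mul_pos ha0 h0.ne', ENNReal.mul_ne_top ha hne, ?_⟩
  have heq : ∀ x, a * G x / (a * lam) = G x / lam := fun x =>
    ENNReal.mul_div_mul_left _ _ ha0 ha
  simpa only [heq] using hint

lemma pointwise_bound {Φ : ℝ≥0 → ℝ≥0∞} {Φ₀ : YoungFunction} {r₀ : ℝ}
    (hΦ₀ : ∀ t : ℝ≥0, Φ t = Φ₀.toFun (t ^ r₀)) (hr₀ : 0 < r₀) {s₁ : ℝ≥0}
    (hs₁ : 1 ≤ s₁) (hs : ∀ s : ℝ≥0, s₁ ≤ s → (s : ℝ≥0∞) ≤ s₁ * Φ₀.toFun s)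
    (t : ℝ≥0∞) :
    t ^ r₀ ≤ s₁ * extendPhi Φ t + s₁ := by
  rcases eq_or_ne t ∞ with h | h
  · subst h
    have he : extendPhi Φ ∞ = ∞ := if_pos rfl
    have hs0 : (s₁ : ℝ≥0∞) ≠ 0 := by
      exact_mod_cast (lt_of_lt_of_le one_pos hs₁).ne'
    rw [ENNReal.top_rpow_of_pos hr₀, he, ENNReal.mul_top hs0]
    simp
  · have ht : t ^ r₀ = ((t.toNNReal ^ r₀ : ℝ≥0) : ℝ≥0∞) := by
      conv_lhs => rw [← ENNReal.coe_toNNReal h]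
      rw [ENNReal.coe_rpow_of_nonneg _ hr₀.le]
    have hext : extendPhi Φ t = Φ₀.toFun (t.toNNReal ^ r₀) := by
      unfold extendPhi; rw [if_neg h, hΦ₀]
    rcases le_or_gt s₁ (t.toNNReal ^ r₀) with hc | hc
    · calc t ^ r₀ = ((t.toNNReal ^ r₀ : ℝ≥0) : ℝ≥0∞) := ht
        _ ≤ s₁ * Φ₀.toFun (t.toNNReal ^ r₀) := hs _ hc
        _ ≤ s₁ * extendPhi Φ t + s₁ := by rw [hext]; exact le_self_add
    · calc t ^ r₀ = ((t.toNNReal ^ r₀ : ℝ≥0) : ℝ≥0∞) := ht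
        _ ≤ (s₁ : ℝ≥0∞) := by exact_mod_cast hc.le
        _ ≤ s₁ * extendPhi Φ t + s₁ := le_add_self

lemma keyLemma {α : Type*} [MeasurableSpace α] (μ : Measure α) {Φ : ℝ≥0 → ℝ≥0∞} {r₀ : ℝ}
    (hr₀ : 0 < r₀) (hΦ : IsQuasiYoung Φ r₀)
    (V : α → ℝ≥0∞) (hV1 : ∀ x, V x ≤ 1) (hVm : Measurable V)
    (hVint : ∫⁻ x, (V x) ^ r₀ ∂μ ≠ ∞) :
    ∃ C : ℝ≥0∞, C ≠ 0 ∧ C ≠ ∞ ∧ ∀ u : α → ℝ≥0∞,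
      luxNorm μ (phiP r₀) (fun x => u x * V x) ≤ C * luxNorm μ Φ u := by
  obtain ⟨Φ₀, hΦ₀⟩ := hΦ
  obtain ⟨s₁, hs₁, hs⟩ := young_lower Φ₀
  set I := ∫⁻ x, (V x) ^ r₀ ∂μ with hI
  set K : ℝ≥0∞ := (s₁ : ℝ≥0∞) * (1 + I) with hK
  have hKne : K ≠ ∞ :=
    ENNReal.mul_ne_top ENNReal.coe_ne_top (by simp [ENNReal.add_ne_top, hVint])
  have hR0 : ENNReal.ofReal r₀ ≠ 0 := by
    simp only [ne_eq, ENNReal.ofReal_eq_zero, not_le]; exact hr₀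
  have hRne : ENNReal.ofReal r₀ ≠ ∞ := ENNReal.ofReal_ne_top
  have hKR : K / ENNReal.ofReal r₀ ≠ ∞ := by
    rw [div_eq_mul_inv]; exact ENNReal.mul_ne_top hKne (ENNReal.inv_ne_top.mpr hR0)
  set C : ℝ≥0∞ := (K / ENNReal.ofReal r₀) ^ (1 / r₀) + 1 with hC
  have hC1 : (1 : ℝ≥0∞) ≤ C := le_add_self
  have hC0 : C ≠ 0 := (lt_of_lt_of_le one_pos hC1).ne'
  have hCtop : C ≠ ∞ :=
    ENNReal.add_ne_top.mpr ⟨ENNReal.rpow_ne_top_of_nonneg (by positivity) hKR, ENNReal.one_ne_top⟩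
  have hCr0 : C ^ r₀ ≠ 0 := by
    intro h
    rcases ENNReal.rpow_eq_zero_iff.mp h with ⟨h1, _⟩ | ⟨_, h2⟩
    · exact hC0 h1
    · exact absurd h2 (not_lt.mpr hr₀.le)
  have hCrt : C ^ r₀ ≠ ∞ := ENNReal.rpow_ne_top_of_nonneg hr₀.le hCtop
  have hCpow : K ≤ C ^ r₀ * ENNReal.ofReal r₀ := by
    have h1 : K / ENNReal.ofReal r₀ ≤ C ^ r₀ := by
      have h2 : ((K / ENNReal.ofReal r₀) ^ (1 / r₀)) ^ r₀ = K / ENNReal.ofReal r₀ := by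
        rw [← ENNReal.rpow_mul, one_div_mul_cancel hr₀.ne', ENNReal.rpow_one]
      rw [← h2]
      exact ENNReal.rpow_le_rpow le_self_add hr₀.le
    exact (ENNReal.div_le_iff_le_mul (Or.inl hR0) (Or.inl hRne)).mp h1
  refine ⟨C, hC0, hCtop, fun u => ?_⟩
  apply le_mul_sInf hC0 hCtop
  rintro lam ⟨hl0, hlne, hlint⟩
  apply sInf_le
  refine ⟨ENNReal.mul_pos hC0 hl0.ne', ENNReal.mul_ne_top hCtop hlne, ?_⟩
  set D : ℝ≥0∞ := (C ^ r₀)⁻¹ * (ENNReal.ofReal r₀)⁻¹ with hD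
  have hDne : D ≠ ∞ :=
    ENNReal.mul_ne_top (ENNReal.inv_ne_top.mpr hCr0) (ENNReal.inv_ne_top.mpr hR0)
  have key : ∀ x, extendPhi (phiP r₀) (u x * V x / (C * lam)) ≤
      ((s₁ : ℝ≥0∞) * extendPhi Φ (u x / lam) + (s₁ : ℝ≥0∞) * (V x) ^ r₀) * D := by
    intro x
    rw [extendPhi_phiP hr₀]
    have hsplit : u x * V x / (C * lam) = (u x / lam) * (V x / C) := by
      rw [div_eq_mul_inv, div_eq_mul_inv, div_eq_mul_inv,
        ENNReal.mul_inv (Or.inl hC0) (Or.inl hCtop)]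
      ring
    rw [hsplit]
    have heq : (u x / lam * (V x / C)) ^ r₀ / ENNReal.ofReal r₀
        = ((u x / lam) ^ r₀ * (V x) ^ r₀) * D := by
      rw [ENNReal.mul_rpow_of_nonneg _ _ hr₀.le, ENNReal.div_rpow_of_nonneg (V x) C hr₀.le, hD]
      simp only [div_eq_mul_inv]
      ring
    rw [heq]
    apply mul_le_mul_left
    have hVr : (V x) ^ r₀ ≤ 1 := ENNReal.rpow_le_one (hV1 x) hr₀.le
    calc (u x / lam) ^ r₀ * (V x) ^ r₀
        ≤ ((s₁ : ℝ≥0∞) * extendPhi Φ (u x / lam) + s₁) * (V x) ^ r₀ :=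
          mul_le_mul_left (pointwise_bound hΦ₀ hr₀ hs₁ hs _) _
      _ = (s₁ : ℝ≥0∞) * extendPhi Φ (u x / lam) * (V x) ^ r₀
            + (s₁ : ℝ≥0∞) * (V x) ^ r₀ := by rw [add_mul]
      _ ≤ (s₁ : ℝ≥0∞) * extendPhi Φ (u x / lam) + (s₁ : ℝ≥0∞) * (V x) ^ r₀ :=
          add_le_add (mul_le_of_le_one_right' hVr) le_rfl
  have hintb : ∫⁻ x, ((s₁ : ℝ≥0∞) * extendPhi Φ (u x / lam)
      + (s₁ : ℝ≥0∞) * (V x) ^ r₀) ∂μ ≤ K := by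
    have hmeas : Measurable fun x => (s₁ : ℝ≥0∞) * (V x) ^ r₀ :=
      (ENNReal.continuous_rpow_const.measurable.comp hVm).const_mul _
    rw [lintegral_add_right _ hmeas]
    have i1 : ∫⁻ x, (s₁ : ℝ≥0∞) * extendPhi Φ (u x / lam) ∂μ ≤ (s₁ : ℝ≥0∞) := by
      rw [lintegral_const_mul' _ _ ENNReal.coe_ne_top]
      calc (s₁ : ℝ≥0∞) * ∫⁻ x, extendPhi Φ (u x / lam) ∂μ
          ≤ (s₁ : ℝ≥0∞) * 1 := mul_le_mul_right hlint _
        _ = (s₁ : ℝ≥0∞) := mul_one _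
    have i2 : ∫⁻ x, (s₁ : ℝ≥0∞) * (V x) ^ r₀ ∂μ = (s₁ : ℝ≥0∞) * I := by
      rw [lintegral_const_mul' _ _ ENNReal.coe_ne_top]
    calc _ ≤ (s₁ : ℝ≥0∞) + (s₁ : ℝ≥0∞) * I := add_le_add i1 i2.le
      _ = K := by rw [hK, mul_add, mul_one]
  have hfinal : D * K ≤ 1 := by
    rw [hD]
    calc (C ^ r₀)⁻¹ * (ENNReal.ofReal r₀)⁻¹ * K
        ≤ (C ^ r₀)⁻¹ * (ENNReal.ofReal r₀)⁻¹ * (C ^ r₀ * ENNReal.ofReal r₀) :=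
          mul_le_mul_right hCpow _
      _ = ((C ^ r₀)⁻¹ * C ^ r₀) * ((ENNReal.ofReal r₀)⁻¹ * ENNReal.ofReal r₀) := by ring
      _ = 1 := by
          rw [ENNReal.inv_mul_cancel hCr0 hCrt, ENNReal.inv_mul_cancel hR0 hRne, one_mul]
  calc ∫⁻ x, extendPhi (phiP r₀) (u x * V x / (C * lam)) ∂μ
      ≤ ∫⁻ x, ((s₁ : ℝ≥0∞) * extendPhi Φ (u x / lam)
          + (s₁ : ℝ≥0∞) * (V x) ^ r₀) * D ∂μ := lintegral_mono key
    _ = (∫⁻ x, ((s₁ : ℝ≥0∞) * extendPhi Φ (u x / lam)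
          + (s₁ : ℝ≥0∞) * (V x) ^ r₀) ∂μ) * D := lintegral_mul_const' D _ hDne
    _ ≤ K * D := mul_le_mul_left hintb _
    _ ≤ 1 := by rw [mul_comm]; exact hfinal


lemma expPolyBound {c θ k : ℝ} (hc : 0 < c) (hθ : 0 < θ) (hk : 0 < k) :
    ∃ C : ℝ, 0 < C ∧ ∀ t : ℝ, 0 ≤ t → Real.exp (-(c * t ^ θ)) ≤ C * (1 + t) ^ (-k) := by
  obtain ⟨m, hm⟩ := exists_nat_ge (k / θ)
  have hmθ : k ≤ m * θ := by rw [div_le_iff₀ hθ] at hm; linarith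
  set B : ℝ := max 1 ((m.factorial : ℝ) / c ^ m) with hB
  have hB1 : (1 : ℝ) ≤ B := le_max_left _ _
  refine ⟨2 ^ k * B, by positivity, fun t ht => ?_⟩
  have h1t : (0 : ℝ) < 1 + t := by linarith
  rw [Real.rpow_neg h1t.le, ← div_eq_mul_inv, le_div_iff₀ (Real.rpow_pos_of_pos h1t k)]
  rcases le_or_gt t 1 with h1 | h1
  · have he : Real.exp (-(c * t ^ θ)) ≤ 1 := Real.exp_le_one_iff.mpr (by
      have h2 : 0 ≤ c * t ^ θ := mul_nonneg hc.le (Real.rpow_nonneg ht θ)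
      linarith)
    have hb : (1 + t) ^ k ≤ 2 ^ k := Real.rpow_le_rpow h1t.le (by linarith) hk.le
    calc Real.exp (-(c * t ^ θ)) * (1 + t) ^ k
        ≤ 1 * 2 ^ k := mul_le_mul he hb (Real.rpow_nonneg h1t.le k) zero_le_one
      _ = 2 ^ k := one_mul _
      _ ≤ 2 ^ k * B := le_mul_of_one_le_right (by positivity) hB1
  · have ht0 : (0 : ℝ) < t := lt_trans one_pos h1
    have htθ : (0 : ℝ) < t ^ θ := Real.rpow_pos_of_pos ht0 θ
    have hu : (0 : ℝ) < c * t ^ θ := mul_pos hc htθ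
    have hfac : (c * t ^ θ) ^ m / (m.factorial : ℝ) ≤ Real.exp (c * t ^ θ) := by
      refine le_trans ?_ (Real.sum_le_exp_of_nonneg hu.le (m + 1))
      exact Finset.single_le_sum (f := fun i => (c * t ^ θ) ^ i / (i.factorial : ℝ))
        (fun i _ => by positivity) (Finset.self_mem_range_succ m)
    have hexp : Real.exp (-(c * t ^ θ)) * (c * t ^ θ) ^ m ≤ (m.factorial : ℝ) := by
      rw [Real.exp_neg, inv_mul_le_iff₀ (Real.exp_pos _)]
      rw [div_le_iff₀ (by positivity : (0 : ℝ) < (m.factorial : ℝ))] at hfac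
      linarith
    have h2 : (1 + t) ^ k ≤ 2 ^ k * (t ^ θ) ^ m := by
      have ha : (1 + t) ^ k ≤ (2 * t) ^ k := Real.rpow_le_rpow h1t.le (by linarith) hk.le
      have hb2 : (2 * t) ^ k = 2 ^ k * t ^ k := Real.mul_rpow (by norm_num) ht0.le
      have hcc : t ^ k ≤ t ^ (θ * (m : ℝ)) :=
        Real.rpow_le_rpow_of_exponent_le h1.le (by rw [mul_comm]; exact hmθ)
      have hd : t ^ (θ * (m : ℝ)) = (t ^ θ) ^ m := by
        rw [Real.rpow_mul ht0.le, Real.rpow_natCast]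
      calc (1 + t) ^ k ≤ 2 ^ k * t ^ k := by rw [← hb2]; exact ha
        _ ≤ 2 ^ k * (t ^ θ) ^ m := by
            rw [← hd]; exact mul_le_mul_of_nonneg_left hcc (by positivity)
    have h3 : Real.exp (-(c * t ^ θ)) * (t ^ θ) ^ m ≤ (m.factorial : ℝ) / c ^ m := by
      have he3 : (t ^ θ) ^ m = (c * t ^ θ) ^ m / c ^ m := by
        rw [mul_pow]; field_simp
      rw [he3, ← mul_div_assoc]
      exact (div_le_div_iff_of_pos_right (by positivity)).mpr hexp
    calc Real.exp (-(c * t ^ θ)) * (1 + t) ^ k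
        ≤ Real.exp (-(c * t ^ θ)) * (2 ^ k * (t ^ θ) ^ m) :=
          mul_le_mul_of_nonneg_left h2 (Real.exp_nonneg _)
      _ = 2 ^ k * (Real.exp (-(c * t ^ θ)) * (t ^ θ) ^ m) := by ring
      _ ≤ 2 ^ k * ((m.factorial : ℝ) / c ^ m) :=
          mul_le_mul_of_nonneg_left h3 (by positivity)
      _ ≤ 2 ^ k * B := mul_le_mul_of_nonneg_left (le_max_right _ _) (by positivity)

lemma norm_sq_le_sum {d : ℕ} (x : RD d) : ‖x‖ ^ 2 ≤ ∑ i, x i ^ 2 := by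
  have h : ‖x‖ ≤ Real.sqrt (∑ i, x i ^ 2) := by
    refine (pi_norm_le_iff_of_nonneg (Real.sqrt_nonneg _)).mpr fun i => ?_
    rw [Real.norm_eq_abs, ← Real.sqrt_sq_eq_abs]
    exact Real.sqrt_le_sqrt
      (Finset.single_le_sum (fun j _ => sq_nonneg (x j)) (Finset.mem_univ i))
  calc ‖x‖ ^ 2 ≤ Real.sqrt (∑ i, x i ^ 2) ^ 2 := pow_le_pow_left₀ (norm_nonneg x) h 2
    _ = ∑ i, x i ^ 2 := Real.sq_sqrt (by positivity)

lemma finrankRD (d : ℕ) : (Module.finrank ℝ (RD d) : ℝ) = (d : ℝ) := by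
  norm_cast
  simp [RD]

lemma intLemExp (d : ℕ) {c θ : ℝ} (hc : 0 < c) (hθ : 0 < θ) :
    ∫⁻ x : RD d, ENNReal.ofReal (Real.exp (-(c * (∑ i, x i ^ 2) ^ θ))) ≠ ∞ := by
  obtain ⟨C, hC, hb⟩ := expPolyBound (c := c) (θ := 2 * θ) (k := (d : ℝ) + 1) hc
    (by positivity) (by positivity)
  have hpt : ∀ x : RD d, ENNReal.ofReal (Real.exp (-(c * (∑ i, x i ^ 2) ^ θ)))
      ≤ ENNReal.ofReal C * ENNReal.ofReal ((1 + ‖x‖) ^ (-((d : ℝ) + 1))) := by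
    intro x
    rw [← ENNReal.ofReal_mul hC.le]
    apply ENNReal.ofReal_le_ofReal
    have h2 : ‖x‖ ^ (2 * θ : ℝ) = (‖x‖ ^ 2) ^ θ := by
      rw [← Real.rpow_natCast ‖x‖ 2, ← Real.rpow_mul (norm_nonneg x)]
      norm_num
    have h1 : ‖x‖ ^ (2 * θ : ℝ) ≤ (∑ i, x i ^ 2) ^ θ := by
      rw [h2]
      exact Real.rpow_le_rpow (by positivity) (norm_sq_le_sum x) hθ.le
    calc Real.exp (-(c * (∑ i, x i ^ 2) ^ θ))
        ≤ Real.exp (-(c * ‖x‖ ^ (2 * θ : ℝ))) := Real.exp_le_exp.mpr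
          (neg_le_neg (mul_le_mul_of_nonneg_left h1 hc.le))
      _ ≤ C * (1 + ‖x‖) ^ (-((d : ℝ) + 1)) := hb ‖x‖ (norm_nonneg x)
  have hfin : (∫⁻ x : RD d, ENNReal.ofReal ((1 + ‖x‖) ^ (-((d : ℝ) + 1)))) < ∞ :=
    finite_integral_one_add_norm (by rw [finrankRD]; linarith)
  have hle : (∫⁻ x : RD d, ENNReal.ofReal (Real.exp (-(c * (∑ i, x i ^ 2) ^ θ))))
      ≤ ENNReal.ofReal C * ∫⁻ x : RD d, ENNReal.ofReal ((1 + ‖x‖) ^ (-((d : ℝ) + 1))) :=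
    (lintegral_mono hpt).trans_eq (lintegral_const_mul' _ _ ENNReal.ofReal_ne_top)
  exact ne_top_of_le_ne_top (ENNReal.mul_ne_top ENNReal.ofReal_ne_top hfin.ne) hle

lemma intLemPoly (d : ℕ) {q : ℝ} (hq : (d : ℝ) < 2 * q) :
    ∫⁻ x : RD d, ENNReal.ofReal ((1 + ∑ i, x i ^ 2) ^ (-q)) ≠ ∞ := by
  have hd0 : (0 : ℝ) ≤ (d : ℝ) := Nat.cast_nonneg d
  have hq0 : 0 < q := by linarith
  have hpt : ∀ x : RD d, ENNReal.ofReal ((1 + ∑ i, x i ^ 2) ^ (-q))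
      ≤ ENNReal.ofReal ((2 : ℝ) ^ q) * ENNReal.ofReal ((1 + ‖x‖) ^ (-(2 * q))) := by
    intro x
    rw [← ENNReal.ofReal_mul (by positivity)]
    apply ENNReal.ofReal_le_ofReal
    have hs0 : (0 : ℝ) ≤ ∑ i, x i ^ 2 := by positivity
    have h1t : (0 : ℝ) < 1 + ‖x‖ := by have := norm_nonneg x; linarith
    have h1s : (0 : ℝ) < 1 + ∑ i, x i ^ 2 := by linarith
    have key : (1 + ‖x‖) ^ (2 * q) ≤ 2 ^ q * (1 + ∑ i, x i ^ 2) ^ q := by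
      have e1 : (1 + ‖x‖) ^ (2 * q) = ((1 + ‖x‖) ^ 2) ^ q := by
        rw [← Real.rpow_natCast (1 + ‖x‖) 2, ← Real.rpow_mul h1t.le]
        norm_num
      have e2 : (1 + ‖x‖) ^ 2 ≤ 2 * (1 + ∑ i, x i ^ 2) := by
        have h3 := norm_sq_le_sum x
        nlinarith [norm_nonneg x, sq_nonneg (‖x‖ - 1)]
      calc (1 + ‖x‖) ^ (2 * q) = ((1 + ‖x‖) ^ 2) ^ q := e1
        _ ≤ (2 * (1 + ∑ i, x i ^ 2)) ^ q := Real.rpow_le_rpow (by positivity) e2 hq0.le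
        _ = 2 ^ q * (1 + ∑ i, x i ^ 2) ^ q := Real.mul_rpow (by norm_num) h1s.le
    rw [Real.rpow_neg h1s.le, Real.rpow_neg h1t.le, ← div_eq_mul_inv,
      le_div_iff₀ (Real.rpow_pos_of_pos h1t _), inv_mul_eq_div,
      div_le_iff₀ (Real.rpow_pos_of_pos h1s _)]
    exact key
  have hfin : (∫⁻ x : RD d, ENNReal.ofReal ((1 + ‖x‖) ^ (-(2 * q)))) < ∞ :=
    finite_integral_one_add_norm (by rw [finrankRD]; exact hq)
  have hle : (∫⁻ x : RD d, ENNReal.ofReal ((1 + ∑ i, x i ^ 2) ^ (-q)))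
      ≤ ENNReal.ofReal ((2 : ℝ) ^ q) * ∫⁻ x : RD d, ENNReal.ofReal ((1 + ‖x‖) ^ (-(2 * q))) :=
    (lintegral_mono hpt).trans_eq (lintegral_const_mul' _ _ ENNReal.ofReal_ne_top)
  exact ne_top_of_le_ne_top (ENNReal.mul_ne_top ENNReal.ofReal_ne_top hfin.ne) hle

lemma assembleGen {d : ℕ} {r₀ : ℝ} (hr₀ : 0 < r₀) {Φ₁ Φ₂ : ℝ≥0 → ℝ≥0∞}
    (hΦ₁ : IsQuasiYoung Φ₁ r₀) (hΦ₂ : IsQuasiYoung Φ₂ r₀)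
    (ω ω' : PS d → ℝ) (hω : ∀ X, 0 ≤ ω X)
    (d₁ d₂ : RD d → ℝ)
    (hd₁m : Measurable d₁) (hd₂m : Measurable d₂)
    (hd₁0 : ∀ x, 0 ≤ d₁ x) (hd₂0 : ∀ x, 0 < d₂ x)
    (hd₁1 : ∀ x, d₁ x ≤ 1) (hd₂1 : ∀ x, d₂ x ≤ 1)
    (hint₁ : ∫⁻ x : RD d, (ENNReal.ofReal (d₁ x)) ^ r₀ ≠ ∞)
    (hint₂ : ∫⁻ x : RD d, (ENNReal.ofReal (d₂ x)) ^ r₀ ≠ ∞)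
    (hsplit : ∀ x ξ : RD d, ω' (x, ξ) ≤ ω (x, ξ) * d₁ x * d₂ ξ) :
    ∃ C : ℝ≥0∞, C ≠ 0 ∧ C ≠ ∞ ∧ ∀ (n : RD d → RD d → ℝ≥0∞) (e cc : RD d → ℝ),
      (∀ x, 0 ≤ e x) →
      luxNorm volume (phiP r₀) (fun ξ => ENNReal.ofReal (cc ξ) *
          luxNorm volume (phiP r₀) (fun x => n ξ x * ENNReal.ofReal (e x * ω' (x, ξ))))
        ≤ C * luxNorm volume Φ₂ (fun ξ => ENNReal.ofReal (cc ξ) *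
          luxNorm volume Φ₁ (fun x => n ξ x * ENNReal.ofReal (e x * ω (x, ξ)))) := by
  obtain ⟨C₁, hC₁0, hC₁t, hkey₁⟩ := keyLemma volume hr₀ hΦ₁ (fun x => ENNReal.ofReal (d₁ x))
    (fun x => ENNReal.ofReal_le_one.mpr (hd₁1 x)) (ENNReal.measurable_ofReal.comp hd₁m) hint₁
  obtain ⟨C₂, hC₂0, hC₂t, hkey₂⟩ := keyLemma volume hr₀ hΦ₂ (fun ξ => ENNReal.ofReal (d₂ ξ))
    (fun ξ => ENNReal.ofReal_le_one.mpr (hd₂1 ξ)) (ENNReal.measurable_ofReal.comp hd₂m) hint₂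
  refine ⟨C₁ * C₂, mul_ne_zero hC₁0 hC₂0, ENNReal.mul_ne_top hC₁t hC₂t, fun n e cc he => ?_⟩
  set M : RD d → ℝ≥0∞ := fun ξ =>
    luxNorm volume Φ₁ (fun x => n ξ x * ENNReal.ofReal (e x * ω (x, ξ))) with hM
  have inner : ∀ ξ : RD d,
      luxNorm volume (phiP r₀) (fun x => n ξ x * ENNReal.ofReal (e x * ω' (x, ξ)))
        ≤ ENNReal.ofReal (d₂ ξ) * (C₁ * M ξ) := by
    intro ξ
    have hof0 : ENNReal.ofReal (d₂ ξ) ≠ 0 := (ENNReal.ofReal_pos.mpr (hd₂0 ξ)).ne'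
    calc luxNorm volume (phiP r₀) (fun x => n ξ x * ENNReal.ofReal (e x * ω' (x, ξ)))
        ≤ luxNorm volume (phiP r₀) (fun x => ENNReal.ofReal (d₂ ξ) *
            ((n ξ x * ENNReal.ofReal (e x * ω (x, ξ))) * ENNReal.ofReal (d₁ x))) := by
          apply luxNorm_mono volume (phiP_mono hr₀)
          intro x
          have h1 : e x * ω' (x, ξ) ≤ e x * (ω (x, ξ) * d₁ x * d₂ ξ) :=
            mul_le_mul_of_nonneg_left (hsplit x ξ) (he x)
          have h2 : ENNReal.ofReal (e x * (ω (x, ξ) * d₁ x * d₂ ξ))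
              = ENNReal.ofReal (d₂ ξ) *
                (ENNReal.ofReal (e x * ω (x, ξ)) * ENNReal.ofReal (d₁ x)) := by
            rw [show e x * (ω (x, ξ) * d₁ x * d₂ ξ) = e x * ω (x, ξ) * d₁ x * d₂ ξ by ring,
              ENNReal.ofReal_mul (mul_nonneg (mul_nonneg (he x) (hω (x, ξ))) (hd₁0 x)),
              ENNReal.ofReal_mul (mul_nonneg (he x) (hω (x, ξ)))]
            ring
          calc n ξ x * ENNReal.ofReal (e x * ω' (x, ξ))
              ≤ n ξ x * ENNReal.ofReal (e x * (ω (x, ξ) * d₁ x * d₂ ξ)) :=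
                mul_le_mul_right (ENNReal.ofReal_le_ofReal h1) _
            _ = ENNReal.ofReal (d₂ ξ) *
                ((n ξ x * ENNReal.ofReal (e x * ω (x, ξ))) * ENNReal.ofReal (d₁ x)) := by
                rw [h2]; ring
      _ ≤ ENNReal.ofReal (d₂ ξ) * luxNorm volume (phiP r₀)
            (fun x => (n ξ x * ENNReal.ofReal (e x * ω (x, ξ))) * ENNReal.ofReal (d₁ x)) :=
          luxNorm_const_mul_le volume _ hof0 ENNReal.ofReal_ne_top _
      _ ≤ ENNReal.ofReal (d₂ ξ) * (C₁ * M ξ) := mul_le_mul_right (hkey₁ _) _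
  calc luxNorm volume (phiP r₀) (fun ξ => ENNReal.ofReal (cc ξ) *
        luxNorm volume (phiP r₀) (fun x => n ξ x * ENNReal.ofReal (e x * ω' (x, ξ))))
      ≤ luxNorm volume (phiP r₀) (fun ξ =>
          C₁ * ((ENNReal.ofReal (cc ξ) * M ξ) * ENNReal.ofReal (d₂ ξ))) := by
        apply luxNorm_mono volume (phiP_mono hr₀)
        intro ξ
        calc ENNReal.ofReal (cc ξ) *
              luxNorm volume (phiP r₀) (fun x => n ξ x * ENNReal.ofReal (e x * ω' (x, ξ)))
            ≤ ENNReal.ofReal (cc ξ) * (ENNReal.ofReal (d₂ ξ) * (C₁ * M ξ)) :=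
              mul_le_mul_right (inner ξ) _
          _ = C₁ * ((ENNReal.ofReal (cc ξ) * M ξ) * ENNReal.ofReal (d₂ ξ)) := by ring
    _ ≤ C₁ * luxNorm volume (phiP r₀)
          (fun ξ => (ENNReal.ofReal (cc ξ) * M ξ) * ENNReal.ofReal (d₂ ξ)) :=
        luxNorm_const_mul_le volume _ hC₁0 hC₁t _
    _ ≤ C₁ * (C₂ * luxNorm volume Φ₂ (fun ξ => ENNReal.ofReal (cc ξ) * M ξ)) :=
        mul_le_mul_right (hkey₂ _) _
    _ = (C₁ * C₂) * luxNorm volume Φ₂ (fun ξ => ENNReal.ofReal (cc ξ) * M ξ) := by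
        rw [mul_assoc]

end Statement18Aux

open Statement18Aux in
/-- `A^{Φ₁,Φ₂}_{(ω)}(ℂ^d) ↪ A^{r₀}_{(ω_r)}(ℂ^d)` for
`ω_r(z) = ω(z)e^{-r|z|^ρ}` (any `ρ ∈ (0,1]`, `r > 0`), and for
`ω_r(z) = ω(z)⟨z⟩^{-r}` when `r > 2d/r₀`. -/
theorem statement18 (d : ℕ) (r₀ : ℝ) (hr : r₀ ∈ Set.Ioc (0:ℝ) 1)
    (Φ₁ Φ₂ : ℝ≥0 → ℝ≥0∞) (hΦ₁ : IsQuasiYoung Φ₁ r₀) (hΦ₂ : IsQuasiYoung Φ₂ r₀)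
    (ω : PS d → ℝ) (hω : IsWeight ω) :
    (∀ ρ : ℝ, ρ ∈ Set.Ioc (0:ℝ) 1 → ∀ r : ℝ, 0 < r →
      ∃ C > 0, ∀ F : CD d → ℂ, Entire d F →
        BNorm d (phiP r₀) (phiP r₀)
            (fun X => ω X *
              Real.exp (-(r * Real.sqrt (∑ i, (X.1 i)^2 + ∑ i, (X.2 i)^2) ^ ρ))) F ≤
          ENNReal.ofReal C * BNorm d Φ₁ Φ₂ ω F) ∧
    (∀ r : ℝ, 2 * d / r₀ < r →
      ∃ C > 0, ∀ F : CD d → ℂ, Entire d F →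
        BNorm d (phiP r₀) (phiP r₀)
            (fun X => ω X * (1 + (∑ i, (X.1 i)^2 + ∑ i, (X.2 i)^2)) ^ (-(r/2))) F ≤
          ENNReal.ofReal C * BNorm d Φ₁ Φ₂ ω F) := by
  obtain ⟨hr0, hr1⟩ := hr
  have hω0 : ∀ X : PS d, 0 ≤ ω X := fun X => (hω.1 X).le
  constructor
  · -- exponential weights
    intro ρ hρ r hr'
    set θ : ℝ := ρ / 2 with hθdef
    have hθ : 0 < θ := div_pos hρ.1 two_pos
    set dd : RD d → ℝ := fun x => Real.exp (-(r / 2 * (∑ i, x i ^ 2) ^ θ)) with hdd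
    have hsum : Measurable fun x : RD d => ∑ i, x i ^ 2 :=
      Finset.measurable_sum Finset.univ fun i _ => (measurable_pi_apply i).pow_const 2
    have hm : Measurable dd := by
      apply Real.measurable_exp.comp
      exact (((Real.continuous_rpow_const hθ.le).measurable.comp hsum).const_mul (r / 2)).neg
    have h0 : ∀ x, 0 ≤ dd x := fun x => (Real.exp_pos _).le
    have hpos : ∀ x, 0 < dd x := fun x => Real.exp_pos _
    have h1 : ∀ x : RD d, dd x ≤ 1 := by
      intro x
      apply Real.exp_le_one_iff.mpr
      have h2 : 0 ≤ r / 2 * (∑ i, x i ^ 2) ^ θ := by positivity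
      linarith
    have hint : ∫⁻ x : RD d, (ENNReal.ofReal (dd x)) ^ r₀ ≠ ∞ := by
      have heq : ∀ x : RD d, (ENNReal.ofReal (dd x)) ^ r₀
          = ENNReal.ofReal (Real.exp (-(r₀ * (r / 2) * (∑ i, x i ^ 2) ^ θ))) := by
        intro x
        rw [ENNReal.ofReal_rpow_of_nonneg (h0 x) hr0.le, hdd]
        congr 1
        rw [← Real.exp_mul]
        congr 1; ring
      simp_rw [heq]
      exact intLemExp d (mul_pos hr0 (by linarith)) hθ
    have hsplit : ∀ x ξ : RD d,
        (fun X : PS d => ω X *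
            Real.exp (-(r * Real.sqrt (∑ i, (X.1 i)^2 + ∑ i, (X.2 i)^2) ^ ρ))) (x, ξ)
          ≤ ω (x, ξ) * dd x * dd ξ := by
      intro x ξ
      simp only
      have ha0 : 0 ≤ ∑ i, x i ^ 2 := by positivity
      have hb0 : 0 ≤ ∑ i, ξ i ^ 2 := by positivity
      have hexp : Real.exp (-(r * Real.sqrt (∑ i, x i ^ 2 + ∑ i, ξ i ^ 2) ^ ρ))
          ≤ dd x * dd ξ := by
        rw [hdd]
        simp only
        rw [← Real.exp_add]
        apply Real.exp_le_exp.mpr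
        have hsq : Real.sqrt (∑ i, x i ^ 2 + ∑ i, ξ i ^ 2) ^ ρ
            = (∑ i, x i ^ 2 + ∑ i, ξ i ^ 2) ^ θ := by
          rw [Real.sqrt_eq_rpow, ← Real.rpow_mul (by linarith), hθdef]
          congr 1; ring
        rw [hsq]
        have hab : (∑ i, x i ^ 2) ^ θ ≤ (∑ i, x i ^ 2 + ∑ i, ξ i ^ 2) ^ θ :=
          Real.rpow_le_rpow ha0 (by linarith) hθ.le
        have hbb : (∑ i, ξ i ^ 2) ^ θ ≤ (∑ i, x i ^ 2 + ∑ i, ξ i ^ 2) ^ θ :=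
          Real.rpow_le_rpow hb0 (by linarith) hθ.le
        have hh1 := mul_le_mul_of_nonneg_left hab (by linarith : (0:ℝ) ≤ r / 2)
        have hh2 := mul_le_mul_of_nonneg_left hbb (by linarith : (0:ℝ) ≤ r / 2)
        linarith
      calc ω (x, ξ) * Real.exp (-(r * Real.sqrt (∑ i, x i ^ 2 + ∑ i, ξ i ^ 2) ^ ρ))
          ≤ ω (x, ξ) * (dd x * dd ξ) := mul_le_mul_of_nonneg_left hexp (hω0 _)
        _ = ω (x, ξ) * dd x * dd ξ := by ring
    obtain ⟨C', hC'0, hC't, hmain⟩ :=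
      assembleGen hr0 hΦ₁ hΦ₂ ω
        (fun X => ω X * Real.exp (-(r * Real.sqrt (∑ i, (X.1 i)^2 + ∑ i, (X.2 i)^2) ^ ρ)))
        hω0 dd dd hm hm h0 hpos h1 h1 hint hint hsplit
    refine ⟨C'.toReal + 1, by positivity, fun F _ => ?_⟩
    have hle : C' ≤ ENNReal.ofReal (C'.toReal + 1) := by
      conv_lhs => rw [← ENNReal.ofReal_toReal hC't]
      exact ENNReal.ofReal_le_ofReal (by linarith [ENNReal.toReal_nonneg (a := C')])
    refine le_trans ?_ (mul_le_mul_left hle _)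
    exact hmain
      (fun ξ x => (‖F (fun i => ((((2:ℝ) ^ (-(1:ℝ)/2) : ℝ) : ℂ)) *
        (((x i : ℝ) : ℂ) - Complex.I * ((ξ i : ℝ) : ℂ)))‖₊ : ℝ≥0∞))
      (fun x => Real.exp (-(∑ i, (x i)^2) / 4))
      (fun ξ => (2 * Real.pi) ^ (-(d:ℝ)/2) * Real.exp (-(∑ i, (ξ i)^2) / 2))
      (fun x => (Real.exp_pos _).le)
  · -- polynomial weights
    intro r hr'
    have hd0 : (0 : ℝ) ≤ 2 * (d : ℝ) / r₀ := by positivity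
    have hrpos : 0 < r := lt_of_le_of_lt hd0 hr'
    set dd : RD d → ℝ := fun x => (1 + ∑ i, x i ^ 2) ^ (-(r/4)) with hdd
    have hbase : ∀ x : RD d, (0:ℝ) < 1 + ∑ i, x i ^ 2 := fun x => by positivity
    have hcont : Continuous fun x : RD d => 1 + ∑ i, x i ^ 2 :=
      continuous_const.add (continuous_finset_sum _ fun i _ => (continuous_apply i).pow 2)
    have hm : Measurable dd :=
      (hcont.rpow_const fun x => Or.inl (hbase x).ne').measurable
    have hpos : ∀ x, 0 < dd x := fun x => Real.rpow_pos_of_pos (hbase x) _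
    have h0 : ∀ x, 0 ≤ dd x := fun x => (hpos x).le
    have h1 : ∀ x : RD d, dd x ≤ 1 := fun x =>
      Real.rpow_le_one_of_one_le_of_nonpos (by linarith [hbase x, (by positivity : (0:ℝ) ≤ ∑ i, x i ^ 2)]) (by linarith)
    have hint : ∫⁻ x : RD d, (ENNReal.ofReal (dd x)) ^ r₀ ≠ ∞ := by
      have heq : ∀ x : RD d, (ENNReal.ofReal (dd x)) ^ r₀
          = ENNReal.ofReal ((1 + ∑ i, x i ^ 2) ^ (-(r/4 * r₀))) := by
        intro x
        rw [ENNReal.ofReal_rpow_of_nonneg (h0 x) hr0.le, hdd]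
        congr 1
        rw [← Real.rpow_mul (hbase x).le]
        congr 1; ring
      simp_rw [heq]
      apply intLemPoly d
      have h2 : 2 * (d:ℝ) < r * r₀ := by
        have := (div_lt_iff₀ hr0).mp hr'
        linarith
      linarith
    have hsplit : ∀ x ξ : RD d,
        (fun X : PS d => ω X *
            (1 + (∑ i, (X.1 i)^2 + ∑ i, (X.2 i)^2)) ^ (-(r/2))) (x, ξ)
          ≤ ω (x, ξ) * dd x * dd ξ := by
      intro x ξ
      simp only
      have ha0 : 0 ≤ ∑ i, x i ^ 2 := by positivity
      have hb0 : 0 ≤ ∑ i, ξ i ^ 2 := by positivity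
      have hA : (0:ℝ) < 1 + ∑ i, x i ^ 2 := by linarith
      have hB : (0:ℝ) < 1 + ∑ i, ξ i ^ 2 := by linarith
      have hS : (0:ℝ) < 1 + (∑ i, x i ^ 2 + ∑ i, ξ i ^ 2) := by linarith
      have key : (1 + (∑ i, x i ^ 2 + ∑ i, ξ i ^ 2)) ^ (-(r/2)) ≤ dd x * dd ξ := by
        rw [hdd]
        simp only
        rw [← Real.mul_rpow hA.le hB.le]
        have hAB : (1 + ∑ i, x i ^ 2) * (1 + ∑ i, ξ i ^ 2)
            ≤ (1 + (∑ i, x i ^ 2 + ∑ i, ξ i ^ 2)) ^ 2 := by nlinarith [sq_nonneg (∑ i, x i ^ 2 + ∑ i, ξ i ^ 2), sq_nonneg (∑ i, x i ^ 2 - ∑ i, ξ i ^ 2), mul_nonneg ha0 hb0]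
        have h2 : ((1 + ∑ i, x i ^ 2) * (1 + ∑ i, ξ i ^ 2)) ^ (r/4)
            ≤ (1 + (∑ i, x i ^ 2 + ∑ i, ξ i ^ 2)) ^ (r/2) := by
          have h3 : ((1 + (∑ i, x i ^ 2 + ∑ i, ξ i ^ 2)) ^ 2) ^ (r/4 : ℝ)
              = (1 + (∑ i, x i ^ 2 + ∑ i, ξ i ^ 2)) ^ (r/2) := by
            rw [← Real.rpow_natCast (1 + (∑ i, x i ^ 2 + ∑ i, ξ i ^ 2)) 2,
              ← Real.rpow_mul hS.le]
            congr 1; push_cast; ring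
          rw [← h3]
          exact Real.rpow_le_rpow (by positivity) hAB (by positivity)
        rw [Real.rpow_neg hS.le, Real.rpow_neg (by positivity)]
        exact inv_anti₀ (Real.rpow_pos_of_pos (by positivity) _) h2
      calc ω (x, ξ) * (1 + (∑ i, x i ^ 2 + ∑ i, ξ i ^ 2)) ^ (-(r/2))
          ≤ ω (x, ξ) * (dd x * dd ξ) := mul_le_mul_of_nonneg_left key (hω0 _)
        _ = ω (x, ξ) * dd x * dd ξ := by ring
    obtain ⟨C', hC'0, hC't, hmain⟩ :=
      assembleGen hr0 hΦ₁ hΦ₂ ω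
        (fun X => ω X * (1 + (∑ i, (X.1 i)^2 + ∑ i, (X.2 i)^2)) ^ (-(r/2)))
        hω0 dd dd hm hm h0 hpos h1 h1 hint hint hsplit
    refine ⟨C'.toReal + 1, by positivity, fun F _ => ?_⟩
    have hle : C' ≤ ENNReal.ofReal (C'.toReal + 1) := by
      conv_lhs => rw [← ENNReal.ofReal_toReal hC't]
      exact ENNReal.ofReal_le_ofReal (by linarith [ENNReal.toReal_nonneg (a := C')])
    refine le_trans ?_ (mul_le_mul_left hle _)
    exact hmain
      (fun ξ x => (‖F (fun i => ((((2:ℝ) ^ (-(1:ℝ)/2) : ℝ) : ℂ)) *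
        (((x i : ℝ) : ℂ) - Complex.I * ((ξ i : ℝ) : ℂ)))‖₊ : ℝ≥0∞))
      (fun x => Real.exp (-(∑ i, (x i)^2) / 4))
      (fun ξ => (2 * Real.pi) ^ (-(d:ℝ)/2) * Real.exp (-(∑ i, (ξ i)^2) / 2))
      (fun x => (Real.exp_pos _).le)

end
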